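/- Let A ∈ ℂ^{N×N} be Hermitian positive semidefinite, let n be a natural number, let τ ≥ 0 satisfy τ · ‖A‖₂ ≤ 1, and set g_τ = Σ_{j=0}^{n} (1/j!) (−τ A)^j. Then for every natural number k: ‖exp(−k τ A) − g_τ^{k}‖₂ ≤ k · (τ ‖A‖₂)^{n+1} / (n+1)!, where exp denotes the matrix exponential. -/

import Mathlib

/-!
Put `b = τ A`, so `0 ≤ b` and `‖b‖ ≤ 1`. By the continuous functional calculus, norm bounds for
`exp (-b)` and for the Taylor polynomial `g = ∑_{j ≤ n} (-b)^j / j!` reduce to bounds for the real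
functions `e^{-x}` and `∑_{j ≤ n} (-x)^j / j!` on the spectrum `⊆ [0, 1]`. There the Taylor series
of `e^{-x}` is alternating with decreasing terms, so its partial sums stay in `[0, 1]` and the
error of `g` is at most the first omitted term `x^{n+1} / (n+1)!`. Hence `exp (-b)` and `g` are
contractions with `‖exp (-b) - g‖ ≤ ‖b‖^{n+1} / (n+1)!`, and telescoping
`X^k - Y^k = X (X^{k-1} - Y^{k-1}) + (X - Y) Y^{k-1}` gives the factor `k`.
-/

open scoped Matrix ComplexOrder Matrix.Norms.L2Operator MatrixOrder Nat

open Finset NormedSpace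

theorem sum_range_neg_one_pow_mul_mem_Icc {α : Type*} [Ring α] [PartialOrder α] [IsOrderedRing α]
    {f : ℕ → α} (hf : Antitone f) (hf0 : ∀ i, 0 ≤ f i) (L : ℕ) :
    ∑ i ∈ range L, (-1) ^ i * f i ∈ Set.Icc 0 (f 0) := by
  induction L generalizing f with
  | zero => simpa using hf0 0
  | succ L ih =>
    have hshift : ∑ i ∈ range (L + 1), (-1) ^ i * f i
        = f 0 - ∑ i ∈ range L, (-1) ^ i * f (i + 1) := by
      simp [sum_range_succ', pow_succ, sub_eq_neg_add]
    obtain ⟨hlow, hup⟩ := ih (f := fun i => f (i + 1)) (fun a b hab => hf (by omega))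
      (fun i => hf0 (i + 1))
    rw [hshift]
    exact ⟨sub_nonneg.2 (hup.trans (hf (Nat.zero_le 1))), sub_le_self _ hlow⟩

theorem antitone_pow_div_factorial {y : ℝ} (hy0 : 0 ≤ y) (hy1 : y ≤ 1) :
    Antitone fun j => y ^ j / (j ! : ℝ) := by
  refine antitone_nat_of_succ_le fun j => ?_
  rw [pow_succ, Nat.factorial_succ, Nat.cast_mul]
  gcongr
  · exact mul_le_of_le_one_right (pow_nonneg hy0 j) hy1
  · exact le_mul_of_one_le_left (Nat.cast_nonneg _) (by norm_num)

theorem abs_sum_range_neg_pow_div_factorial_le_one {y : ℝ} (hy0 : 0 ≤ y) (hy1 : y ≤ 1) (m : ℕ) :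
    |∑ j ∈ range m, (-y) ^ j / (j ! : ℝ)| ≤ 1 := by
  simp_rw [neg_pow y, mul_div_assoc]
  obtain ⟨h0, h1⟩ := sum_range_neg_one_pow_mul_mem_Icc (antitone_pow_div_factorial hy0 hy1)
    (fun j => by positivity) m
  exact abs_le.2 ⟨by linarith, by simpa using h1⟩

theorem abs_exp_neg_sub_sum_range_le {y : ℝ} (hy0 : 0 ≤ y) (hy1 : y ≤ 1) (m : ℕ) :
    |Real.exp (-y) - ∑ j ∈ range m, (-y) ^ j / (j ! : ℝ)| ≤ y ^ m / (m ! : ℝ) := by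
  have hexp : Real.exp (-y) = ∑' j, (-1) ^ j * (y ^ j / (j ! : ℝ)) := by
    simp_rw [Real.exp_eq_exp_ℝ, exp_eq_tsum_div, neg_pow y, mul_div_assoc]
  simp_rw [hexp, neg_pow y, mul_div_assoc]
  exact alternating_series_error_bound _ (antitone_pow_div_factorial hy0 hy1)
    (Real.summable_pow_div_factorial y) m

theorem norm_pow_sub_pow_le_of_norm_le_one {R : Type*} [NormedRing R] {x y : R} (hx : ‖x‖ ≤ 1)
    (hy : ‖y‖ ≤ 1) (k : ℕ) : ‖x ^ k - y ^ k‖ ≤ k * ‖x - y‖ := by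
  -- `k = 0` is split off because `‖1‖ ≤ 1` fails in the zero ring.
  rcases k with _ | k
  · simp
  induction k with
  | zero => simp
  | succ k ih =>
    have hyk : ‖y ^ (k + 1)‖ ≤ 1 :=
      (norm_pow_le' y k.succ_pos).trans (pow_le_one₀ (norm_nonneg y) hy)
    calc ‖x ^ (k + 2) - y ^ (k + 2)‖
        = ‖x * (x ^ (k + 1) - y ^ (k + 1)) + (x - y) * y ^ (k + 1)‖ := by
          rw [pow_succ' x (k + 1), pow_succ' y (k + 1)]; noncomm_ring
      _ ≤ ‖x‖ * ‖x ^ (k + 1) - y ^ (k + 1)‖ + ‖x - y‖ * ‖y ^ (k + 1)‖ :=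
          norm_add_le_of_le (norm_mul_le _ _) (norm_mul_le _ _)
      _ ≤ 1 * ((k + 1 : ℕ) * ‖x - y‖) + ‖x - y‖ * 1 := by gcongr
      _ = (k + 2 : ℕ) * ‖x - y‖ := by push_cast; ring

section CStarAlgebra

variable {𝔸 : Type*} [CStarAlgebra 𝔸] (𝕂 : Type*) [Field 𝕂] [Algebra 𝕂 𝔸]

theorem expSeries_partialSum_eq_cfc {a : 𝔸} (ha : IsSelfAdjoint a) (m : ℕ) :
    (expSeries 𝕂 𝔸).partialSum m a = cfc (fun x : ℝ => ∑ j ∈ range m, x ^ j / (j ! : ℝ)) a := by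
  have hsum : (fun x : ℝ => ∑ j ∈ range m, x ^ j / (j ! : ℝ))
      = ∑ j ∈ range m, fun x : ℝ => (j ! : ℝ)⁻¹ • x ^ j := by
    ext x; simp [div_eq_inv_mul]
  rw [hsum, cfc_sum _ a _ (fun j _ => by fun_prop)]
  refine sum_congr rfl fun j _ => ?_
  rw [cfc_smul _ _ a, cfc_pow_id a j ha, expSeries_apply_eq, inv_natCast_smul_eq 𝕂 ℝ]

variable [PartialOrder 𝔸] [StarOrderedRing 𝔸] {b : 𝔸}

theorem spectrum_subset_Icc_norm_of_nonneg (hb : 0 ≤ b) : spectrum ℝ b ⊆ Set.Icc 0 ‖b‖ :=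
  fun x hx => ⟨spectrum_nonneg_of_nonneg hb hx,
    (le_algebraMap_iff_spectrum_le (IsSelfAdjoint.of_nonneg hb)).1
      (IsSelfAdjoint.of_nonneg hb).le_algebraMap_norm_self x hx⟩

theorem exp_neg_eq_cfc (hb : 0 ≤ b) : exp (-b) = cfc (fun x : ℝ => Real.exp (-x)) b := by
  rw [cfc_comp_neg Real.exp b, CFC.real_exp_eq_normedSpace_exp (IsSelfAdjoint.of_nonneg hb).neg]

theorem expSeries_partialSum_neg_eq_cfc (hb : 0 ≤ b) (m : ℕ) :
    (expSeries 𝕂 𝔸).partialSum m (-b)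
      = cfc (fun x : ℝ => ∑ j ∈ range m, (-x) ^ j / (j ! : ℝ)) b := by
  rw [expSeries_partialSum_eq_cfc 𝕂 (IsSelfAdjoint.of_nonneg hb).neg,
    ← cfc_comp_neg (fun x : ℝ => ∑ j ∈ range m, x ^ j / (j ! : ℝ)) b]

theorem norm_exp_neg_le_one (hb : 0 ≤ b) : ‖exp (-b)‖ ≤ 1 := by
  rw [exp_neg_eq_cfc hb]
  refine norm_cfc_le zero_le_one fun x hx => ?_
  rw [Real.norm_eq_abs, Real.abs_exp, Real.exp_le_one_iff, neg_nonpos]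
  exact (spectrum_subset_Icc_norm_of_nonneg hb hx).1

theorem norm_expSeries_partialSum_neg_le_one (hb : 0 ≤ b) (hb1 : ‖b‖ ≤ 1) (m : ℕ) :
    ‖(expSeries 𝕂 𝔸).partialSum m (-b)‖ ≤ 1 := by
  rw [expSeries_partialSum_neg_eq_cfc 𝕂 hb]
  refine norm_cfc_le zero_le_one fun x hx => ?_
  obtain ⟨hx0, hx1⟩ := spectrum_subset_Icc_norm_of_nonneg hb hx
  exact abs_sum_range_neg_pow_div_factorial_le_one hx0 (hx1.trans hb1) m

theorem norm_exp_neg_sub_expSeries_partialSum_neg_le (hb : 0 ≤ b) (hb1 : ‖b‖ ≤ 1) (m : ℕ) :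
    ‖exp (-b) - (expSeries 𝕂 𝔸).partialSum m (-b)‖ ≤ ‖b‖ ^ m / (m ! : ℝ) := by
  rw [exp_neg_eq_cfc hb, expSeries_partialSum_neg_eq_cfc 𝕂 hb,
    ← cfc_sub (fun x : ℝ => Real.exp (-x)) (fun x => ∑ j ∈ range m, (-x) ^ j / (j ! : ℝ)) b]
  refine norm_cfc_le (by positivity) fun x hx => ?_
  obtain ⟨hx0, hx1⟩ := spectrum_subset_Icc_norm_of_nonneg hb hx
  calc _ ≤ x ^ m / (m ! : ℝ) := abs_exp_neg_sub_sum_range_le hx0 (hx1.trans hb1) m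
    _ ≤ ‖b‖ ^ m / (m ! : ℝ) := by gcongr

end CStarAlgebra

/-- If `A` is Hermitian positive semidefinite, `0 ≤ τ` with `τ · ‖A‖₂ ≤ 1`, and
`g_τ = ∑_{j=0}^{n} (1/j!) (−τ A)^j`, then for every `k`,
`‖exp(−k τ A) − g_τ^k‖₂ ≤ k (τ ‖A‖₂)^{n+1} / (n+1)!`. -/
theorem matrix_exp_pow_taylor_remainder {N : ℕ} (A : Matrix (Fin N) (Fin N) ℂ)
    (hA : A.PosSemidef) (n : ℕ) (τ : ℝ) (hτ : 0 ≤ τ) (hτA : τ * ‖A‖ ≤ 1) :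
    ∀ k : ℕ,
      ‖NormedSpace.exp ((-((k : ℂ) * (τ : ℂ))) • A)
          - (∑ j ∈ Finset.range (n + 1), ((Nat.factorial j : ℂ))⁻¹ • ((-(τ : ℂ)) • A) ^ j) ^ k‖
        ≤ (k : ℝ) * (τ * ‖A‖) ^ (n + 1) / (Nat.factorial (n + 1) : ℝ) := by
  intro k
  set b := (τ : ℂ) • A
  have hb : 0 ≤ b := (hA.smul (Complex.zero_le_real.2 hτ)).nonneg
  have hb_norm : ‖b‖ = τ * ‖A‖ := by rw [norm_smul, Complex.norm_real, Real.norm_of_nonneg hτ]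
  have hexp : exp ((-((k : ℂ) * (τ : ℂ))) • A) = exp (-b) ^ k := by
    rw [← Matrix.exp_nsmul, ← Nat.cast_smul_eq_nsmul ℂ, smul_neg, smul_smul, neg_smul]
  have hsum : ∑ j ∈ range (n + 1), ((j ! : ℂ))⁻¹ • ((-(τ : ℂ)) • A) ^ j
      = (expSeries ℂ _).partialSum (n + 1) (-b) := by
    simp [FormalMultilinearSeries.partialSum, expSeries_apply_eq, b]
  rw [hexp, hsum, ← hb_norm]
  calc _ ≤ k * ‖exp (-b) - (expSeries ℂ _).partialSum (n + 1) (-b)‖ :=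
        norm_pow_sub_pow_le_of_norm_le_one (norm_exp_neg_le_one hb)
          (norm_expSeries_partialSum_neg_le_one ℂ hb (hb_norm ▸ hτA) _) k
    _ ≤ k * (‖b‖ ^ (n + 1) / ((n + 1) ! : ℝ)) := by
        gcongr; exact norm_exp_neg_sub_expSeries_partialSum_neg_le ℂ hb (hb_norm ▸ hτA) _
    _ = _ := by ring
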